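/- arXiv:1401.1034 — 3 statements merged into one kernel-verified Lean document; each statement's English description precedes it below -/
import Mathlib

section
/- For any 0 < α < 1/2 there exists ε > 0 such that the following holds: the limsup over K → ∞ of the infimum over all tuples (b_0, …, b_K) ∈ [1,∞)^{K+1} of the sum ∑_{i=0}^{K} (1/2 + b_i/(K+2)^{1+ε}) / ((b_{i-1}+b_i)^α (b_i+b_{i+1})^α) is +∞, where by convention b_{-1} = b_{K+1} = 0. -/
/-!
Put `p = 1 - 2α`, `β = 2α` and `u_i = (b_{i-1} + b_i)^α (b_i + b_{i+1})^α ≥ 1`.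
Hölder's inequality with exponents `1` and `p / β` gives `K + 1 ≤ (∑ 1 / u_i)^p T^β` and
`P ≤ (∑ b_i / u_i)^p T^β`, where `P = ∑ b_i^p` and `T = ∑ u_i^(p/β)`. Since
`u_i ≤ (b_{i-1} + b_i + b_{i+1})^β` and `x ↦ x^p` is subadditive, `T ≤ 3 P`; eliminating `P`
and `T` leaves `K + 1 ≤ C N^(2α) S`, where `S` is the sum with `b_i / N` in the numerators.
For `N = (K + 2)^(1 + ε)` with `2α (1 + ε) < 1` this forces `S → ∞`.
-/

open Filter Finset Real

lemma sum_rpow_le_sum_div_rpow_mul_sum_rpow {ι : Type*} (s : Finset ι) {u v : ι → ℝ} {p β : ℝ}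
    (hp : 0 < p) (hβ : 0 < β) (hpβ : p + β = 1) (hu : ∀ i ∈ s, 0 < u i) (hv : ∀ i ∈ s, 0 ≤ v i) :
    ∑ i ∈ s, v i ^ p ≤ (∑ i ∈ s, v i / u i) ^ p * (∑ i ∈ s, u i ^ (p / β)) ^ β := by
  have htriple : Real.HolderTriple 1 (p / β) p := by
    refine ⟨?_, one_pos, div_pos hp hβ⟩
    field_simp
    linarith
  have h := Real.Lr_rpow_le_Lp_mul_Lq_of_nonneg s htriple
    (fun i hi => div_nonneg (hv i hi) (hu i hi).le) (fun i hi => (hu i hi).le)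
  simp only [rpow_one, div_one, div_div_cancel₀ hp.ne'] at h
  convert h using 3 with i hi
  rw [div_mul_cancel₀ _ (hu i hi).ne']

lemma sum_comp_add_le {s : Finset ℤ} {f : ℤ → ℝ} (hf : ∀ i, 0 ≤ f i)
    (hs : ∀ i ∉ s, f i = 0) (c : ℤ) : ∑ i ∈ s, f (i + c) ≤ ∑ i ∈ s, f i := by
  set t := s.map (addRightEmbedding c)
  calc ∑ i ∈ s, f (i + c) = ∑ j ∈ t, f j := (sum_map s (addRightEmbedding c) f).symm
    _ ≤ ∑ j ∈ t ∪ s, f j := sum_le_sum_of_subset_of_nonneg subset_union_left fun i _ _ => hf i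
    _ = ∑ j ∈ s, f j := (sum_subset subset_union_right fun i _ hi => hs i hi).symm

noncomputable def neighbourWeight (α : ℝ) (b : ℤ → ℝ) (i : ℤ) : ℝ :=
  (b (i - 1) + b i) ^ α * (b i + b (i + 1)) ^ α

section neighbourWeight

variable {α : ℝ} {b : ℤ → ℝ}

lemma one_le_neighbourWeight (hα : 0 ≤ α) (hb : ∀ j, 0 ≤ b j) {i : ℤ} (hi : 1 ≤ b i) :
    1 ≤ neighbourWeight α b i :=
  one_le_mul_of_one_le_of_one_le (one_le_rpow (by linarith [hb (i - 1)]) hα)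
    (one_le_rpow (by linarith [hb (i + 1)]) hα)

lemma neighbourWeight_le (hα : 0 < α) (hb : ∀ j, 0 ≤ b j) (i : ℤ) :
    neighbourWeight α b i ≤ (b (i - 1) + b i + b (i + 1)) ^ (2 * α) := by
  have := hb (i - 1); have := hb i; have := hb (i + 1)
  rw [two_mul, rpow_add' (by positivity) (by positivity)]
  unfold neighbourWeight
  gcongr ?_ ^ _ * ?_ ^ _ <;> linarith

lemma neighbourWeight_rpow_le (hα0 : 0 < α) (hα : α ≤ 1 / 2) (hb : ∀ j, 0 ≤ b j) (i : ℤ) :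
    neighbourWeight α b i ^ ((1 - 2 * α) / (2 * α)) ≤
      b (i - 1) ^ (1 - 2 * α) + b i ^ (1 - 2 * α) + b (i + 1) ^ (1 - 2 * α) := by
  have := hb (i - 1); have := hb i; have := hb (i + 1)
  have hp0 : 0 ≤ 1 - 2 * α := by linarith
  have hp1 : 1 - 2 * α ≤ 1 := by linarith
  calc neighbourWeight α b i ^ ((1 - 2 * α) / (2 * α))
      ≤ ((b (i - 1) + b i + b (i + 1)) ^ (2 * α)) ^ ((1 - 2 * α) / (2 * α)) :=
        rpow_le_rpow (by unfold neighbourWeight; positivity) (neighbourWeight_le hα0 hb i)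
          (by positivity)
    _ = (b (i - 1) + b i + b (i + 1)) ^ (1 - 2 * α) := by
        rw [← rpow_mul (by positivity), mul_div_cancel₀ _ (by positivity)]
    _ ≤ (b (i - 1) + b i) ^ (1 - 2 * α) + b (i + 1) ^ (1 - 2 * α) :=
        rpow_add_le_add_rpow (by positivity) (hb _) hp0 hp1
    _ ≤ b (i - 1) ^ (1 - 2 * α) + b i ^ (1 - 2 * α) + b (i + 1) ^ (1 - 2 * α) := by
        gcongr
        exact rpow_add_le_add_rpow (hb _) (hb _) hp0 hp1

lemma sum_neighbourWeight_rpow_le (hα0 : 0 < α) (hα : α < 1 / 2) {s : Finset ℤ}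
    (hb : ∀ j, 0 ≤ b j) (hs : ∀ j ∉ s, b j = 0) :
    ∑ i ∈ s, neighbourWeight α b i ^ ((1 - 2 * α) / (2 * α)) ≤
      3 * ∑ i ∈ s, b i ^ (1 - 2 * α) := by
  set f : ℤ → ℝ := fun j => b j ^ (1 - 2 * α)
  have hf : ∀ j, 0 ≤ f j := fun j => rpow_nonneg (hb j) _
  have hfs : ∀ j ∉ s, f j = 0 := fun j hj => by
    simp only [f, hs j hj, zero_rpow (by linarith : 1 - 2 * α ≠ 0)]
  have hleft := sum_comp_add_le hf hfs (-1)
  have hright := sum_comp_add_le hf hfs 1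
  simp only [← sub_eq_add_neg] at hleft
  calc ∑ i ∈ s, neighbourWeight α b i ^ ((1 - 2 * α) / (2 * α))
      ≤ ∑ i ∈ s, (f (i - 1) + f i + f (i + 1)) :=
        sum_le_sum fun i _ => neighbourWeight_rpow_le hα0 hα.le hb i
    _ = ∑ i ∈ s, f (i - 1) + ∑ i ∈ s, f i + ∑ i ∈ s, f (i + 1) := by
        rw [sum_add_distrib, sum_add_distrib]
    _ ≤ 3 * ∑ i ∈ s, f i := by linarith

end neighbourWeight

lemma le_rpow_mul_rpow_of_holder_bounds {p β c n A D P T : ℝ} (hp : 0 < p) (hβ : 0 < β)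
    (hpβ : p + β = 1) (hc : 0 ≤ c) (hA : 0 ≤ A) (hD : 0 ≤ D) (hP : 0 ≤ P) (hT : 0 ≤ T)
    (hTP : T ≤ c * P) (hn : n ≤ A ^ p * T ^ β) (hPD : P ≤ D ^ p * T ^ β) :
    n ≤ c ^ (β / p) * A ^ p * D ^ β := by
  have hP_le : P ≤ c ^ (β / p) * D := by
    rcases hP.eq_or_lt with rfl | hP
    · positivity
    have h : P ^ p * P ^ β ≤ (c ^ (β / p) * D) ^ p * P ^ β :=
      calc P ^ p * P ^ β = P := by rw [← rpow_add hP, hpβ, rpow_one]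
        _ ≤ D ^ p * (c * P) ^ β := hPD.trans (by gcongr)
        _ = (c ^ (β / p) * D) ^ p * P ^ β := by
          rw [mul_rpow hc hP.le, mul_rpow (by positivity) hD, ← rpow_mul hc,
            div_mul_cancel₀ _ hp.ne']
          ring
    exact (rpow_le_rpow_iff hP.le (by positivity) hp).1
      (le_of_mul_le_mul_right h (rpow_pos_of_pos hP β))
  have hexp : (1 + β / p) * β = β / p := by field_simp; linear_combination hpβ
  calc n ≤ A ^ p * (c * (c ^ (β / p) * D)) ^ β :=
        hn.trans (by gcongr; exact hTP.trans (by gcongr))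
    _ = c ^ (β / p) * A ^ p * D ^ β := by
        rw [← mul_assoc, ← rpow_one_add' hc (by positivity), mul_rpow (by positivity) hD,
          ← rpow_mul hc, hexp]
        ring

theorem card_le_mul_sum_div_neighbourWeight {α N : ℝ} (hα0 : 0 < α) (hα : α < 1 / 2)
    (hN : 0 < N) {s : Finset ℤ} {b : ℤ → ℝ} (hb1 : ∀ i ∈ s, 1 ≤ b i)
    (hb0 : ∀ i ∉ s, b i = 0) :
    (#s : ℝ) ≤ 3 ^ (2 * α / (1 - 2 * α)) * 2 ^ (1 - 2 * α) * N ^ (2 * α) *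
      ∑ i ∈ s, (1 / 2 + b i / N) / neighbourWeight α b i := by
  have hb : ∀ j, 0 ≤ b j := fun j => by
    by_cases hj : j ∈ s
    · linarith [hb1 j hj]
    · rw [hb0 j hj]
  have hu : ∀ i ∈ s, 0 < neighbourWeight α b i := fun i hi =>
    one_pos.trans_le (one_le_neighbourWeight hα0.le hb (hb1 i hi))
  have hp : 0 < 1 - 2 * α := by linarith
  have hβ : 0 < 2 * α := by linarith
  have hpβ : 1 - 2 * α + 2 * α = 1 := by ring
  set u := neighbourWeight α b
  set S := ∑ i ∈ s, (1 / 2 + b i / N) / u i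
  have hcard := sum_rpow_le_sum_div_rpow_mul_sum_rpow s hp hβ hpβ hu (v := fun _ => 1)
    fun _ _ => zero_le_one
  simp only [one_rpow, sum_const, nsmul_eq_mul, mul_one] at hcard
  have hinv0 : 0 ≤ ∑ i ∈ s, 1 / u i := sum_nonneg fun i hi => (one_div_pos.2 (hu i hi)).le
  have hdiv0 : 0 ≤ ∑ i ∈ s, b i / u i := sum_nonneg fun i hi => div_nonneg (hb i) (hu i hi).le
  have hsum := le_rpow_mul_rpow_of_holder_bounds hp hβ hpβ (by norm_num : (0 : ℝ) ≤ 3)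
    hinv0 hdiv0 (sum_nonneg fun i _ => rpow_nonneg (hb i) _)
    (sum_nonneg fun i hi => rpow_nonneg (hu i hi).le _)
    (sum_neighbourWeight_rpow_le hα0 hα hb hb0) hcard
    (sum_rpow_le_sum_div_rpow_mul_sum_rpow s hp hβ hpβ hu fun i _ => hb i)
  have hbN : ∀ i, 0 ≤ b i / N := fun i => div_nonneg (hb i) hN.le
  have hS : 0 ≤ S := sum_nonneg fun i hi => div_nonneg (by linarith [hbN i]) (hu i hi).le
  have hinv : ∑ i ∈ s, 1 / u i ≤ 2 * S := by
    rw [mul_sum]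
    refine sum_le_sum fun i hi => ?_
    rw [← mul_div_assoc]
    exact div_le_div_of_nonneg_right (by linarith [hbN i]) (hu i hi).le
  have hdiv : ∑ i ∈ s, b i / u i ≤ N * S := by
    rw [mul_sum]
    refine sum_le_sum fun i hi => ?_
    rw [← mul_div_assoc, mul_add, mul_div_cancel₀ _ hN.ne']
    exact div_le_div_of_nonneg_right (by linarith) (hu i hi).le
  calc (#s : ℝ) ≤ 3 ^ (2 * α / (1 - 2 * α)) * (2 * S) ^ (1 - 2 * α) * (N * S) ^ (2 * α) :=
        hsum.trans (by gcongr)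
    _ = 3 ^ (2 * α / (1 - 2 * α)) * 2 ^ (1 - 2 * α) * N ^ (2 * α) *
          (S ^ (1 - 2 * α) * S ^ (2 * α)) := by
        rw [mul_rpow zero_le_two hS, mul_rpow hN.le hS]
        ring
    _ = 3 ^ (2 * α / (1 - 2 * α)) * 2 ^ (1 - 2 * α) * N ^ (2 * α) * S := by
        rw [← rpow_add' hS (by rw [hpβ]; exact one_ne_zero), hpβ, rpow_one]

lemma exists_const_mul_rpow_le_sum_Icc {α : ℝ} (hα0 : 0 < α) (hα : α < 1 / 2) :
    ∃ C > 0, ∀ (K : ℕ) (b : ℤ → ℝ), (∀ i ∈ Icc (0 : ℤ) K, 1 ≤ b i) →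
      (∀ i ∉ Icc (0 : ℤ) K, b i = 0) →
      C * ((K : ℝ) + 2) ^ ((1 - 2 * α) / 2) ≤ ∑ i ∈ Icc (0 : ℤ) K,
        (1 / 2 + b i / ((K : ℝ) + 2) ^ (1 + (1 - 2 * α) / (4 * α))) / neighbourWeight α b i := by
  have hp : 0 < 1 - 2 * α := by linarith
  set C : ℝ := 3 ^ (2 * α / (1 - 2 * α)) * 2 ^ (1 - 2 * α) with hC
  refine ⟨1 / (2 * C), by positivity, fun K b hb1 hb0 => ?_⟩
  have hK2 : (0 : ℝ) < K + 2 := by positivity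
  have key := card_le_mul_sum_div_neighbourWeight hα0 hα
    (rpow_pos_of_pos hK2 (1 + (1 - 2 * α) / (4 * α))) hb1 hb0
  -- `ε = (1 - 2α) / (4α)` is chosen so that `N ^ (2α)` is `(K + 2) ^ ((1 + 2α) / 2)`.
  have hN : (((K : ℝ) + 2) ^ (1 + (1 - 2 * α) / (4 * α))) ^ (2 * α) =
      ((K : ℝ) + 2) ^ ((1 + 2 * α) / 2) := by
    rw [← rpow_mul hK2.le]; congr 1; field_simp; ring
  have hsplit :
      ((K : ℝ) + 2) ^ ((1 - 2 * α) / 2) * ((K : ℝ) + 2) ^ ((1 + 2 * α) / 2) = K + 2 := by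
    rw [← rpow_add hK2, show (1 - 2 * α) / 2 + (1 + 2 * α) / 2 = 1 by ring, rpow_one]
  have hcard : (#(Icc (0 : ℤ) K) : ℝ) = K + 1 := by simp
  rw [hcard, hN, ← hC] at key
  rw [one_div_mul_eq_div, div_le_iff₀ (by positivity)]
  refine le_of_mul_le_mul_right ?_ (rpow_pos_of_pos hK2 ((1 + 2 * α) / 2))
  rw [hsplit]
  linarith

/-- For any `0 < α < 1/2` there exists `ε > 0` such that the limsup over `K → ∞` of the
infimum over all tuples `(b_0, …, b_K) ∈ [1,∞)^{K+1}` of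
`∑_{i=0}^{K} (1/2 + b_i/(K+2)^{1+ε}) / ((b_{i-1}+b_i)^α (b_i+b_{i+1})^α)` is `+∞`,
with the convention `b_{-1} = b_{K+1} = 0`. -/
theorem stmt0 (α : ℝ) (hα0 : 0 < α) (hα : α < 1/2) :
    ∃ ε : ℝ, 0 < ε ∧ ∀ A : ℝ, ∃ᶠ K : ℕ in atTop, ∀ b : ℤ → ℝ,
      (∀ i ∈ Finset.Icc (0:ℤ) (K:ℤ), 1 ≤ b i) →
      (∀ i, i ∉ Finset.Icc (0:ℤ) (K:ℤ) → b i = 0) →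
      A < ∑ i ∈ Finset.Icc (0:ℤ) (K:ℤ),
        (1/2 + b i / ((K:ℝ)+2) ^ ((1:ℝ)+ε)) /
          ((b (i-1) + b i) ^ α * (b i + b (i+1)) ^ α) := by
  obtain ⟨C, hC, hbound⟩ := exists_const_mul_rpow_le_sum_Icc hα0 hα
  have hp : 0 < 1 - 2 * α := by linarith
  refine ⟨(1 - 2 * α) / (4 * α), by positivity, fun A => Eventually.frequently ?_⟩
  have hgrowth : Tendsto (fun K : ℕ => C * ((K : ℝ) + 2) ^ ((1 - 2 * α) / 2)) atTop atTop :=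
    ((tendsto_rpow_atTop (by positivity)).comp
      (tendsto_atTop_add_const_right _ 2 tendsto_natCast_atTop_atTop)).const_mul_atTop hC
  filter_upwards [hgrowth.eventually_gt_atTop A] with K hK b hb1 hb0
  exact hK.trans_le (hbound K b hb1 hb0)
end

section
/- Consider the vertex-reinforced random walk X on ℤ with nondecreasing weight w : ℕ → (0,∞), starting at X_0 = 0, with transition probabilities P(X_{n+1} = X_n ± 1 | F_n) = w(Z_n(X_n ± 1)) / (w(Z_n(X_n+1)) + w(Z_n(X_n−1))), where Z_n(x) is the number of visits of x up to time n. Define the process M_n recursively by M_0 = 0, with Δ_0(z) = 1 for z < 0, and: if X_{n+1} = X_n − 1 then M_{n+1} = M_n − a_{X_n} Δ_n(X_n − 1); if X_{n+1} = X_n + 1 then M_{n+1} = M_n + a_{X_n} Δ_n(X_n − 1) · w(Z_n(X_n−1))/w(Z_n(X_n+1)), and Δ_{n+1}(X_n) is set to this increment. Then (M_n) is a martingale with respect to the natural filtration of X. -/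
/-!
Write `g_n = a_{X_n} Δ_n(X_n - 1)` (`leftIncrement`), `r_n = w(Z_n(X_n - 1)) / w(Z_n(X_n + 1))`
(`weightRatio`) and `R_n` for the event that the walk steps right at time `n`. Then
`M_{n+1} - M_n = g_n ((r_n + 1) 1_{R_n} - 1)`, `g_n` and `r_n` are `ℱ_n`-measurable, and
`(r_n + 1) P(R_n | ℱ_n) = 1`, so pulling out the known factors kills the conditional expectation
of the increment. Integrability holds because every visit count up to time `n` is at most
`n + 1`, so by monotonicity of `w` each `r_k` is at most `w(k + 1) / w(0)`, whence
`|Δ_n| ≤ ∏_{k<n} w(k + 1) / w(0)`.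
-/

open MeasureTheory Filter

/-- Number of visits of the walk `X` to site `x` up to time `n` (inclusive). -/
def visits {Ω : Type*} (X : ℕ → Ω → ℤ) (n : ℕ) (x : ℤ) (ω : Ω) : ℕ :=
  ((Finset.range (n+1)).filter (fun k => X k ω = x)).card

theorem visits_le {Ω : Type*} (X : ℕ → Ω → ℤ) (n : ℕ) (x : ℤ) (ω : Ω) :
    visits X n x ω ≤ n + 1 :=
  (Finset.card_filter_le _ _).trans (Finset.card_range _).le

theorem measurable_apply_of_countable {α ι β : Type*} {_ : MeasurableSpace α} [MeasurableSpace ι]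
    [MeasurableSpace β] [Countable ι] [MeasurableSingletonClass ι] {f : ι → α → β}
    (hf : ∀ i, Measurable (f i)) {g : α → ι} (hg : Measurable g) :
    Measurable fun x => f (g x) x :=
  (measurable_from_prod_countable_left (f := fun p : α × ι => f p.2 p.1) hf).comp
    (measurable_id.prodMk hg)

theorem mul_indicator_one_eq_indicator {α M₀ : Type*} [MulZeroOneClass M₀] (f : α → M₀)
    (s : Set α) : f * s.indicator (fun _ => 1) = s.indicator f :=
  funext fun x => by by_cases hx : x ∈ s <;> simp [hx]

section PullOut

variable {Ω : Type*} {m m0 : MeasurableSpace Ω} {μ : Measure Ω} [IsFiniteMeasure μ]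

theorem condExp_mul_mul_indicator_sub_one (hm : m ≤ m0) {g c : Ω → ℝ}
    (hg : StronglyMeasurable[m] g) (hc : StronglyMeasurable[m] c)
    (hgi : Integrable g μ) (hgci : Integrable (g * c) μ) {s : Set Ω} (hs : MeasurableSet s) :
    μ[g * (c * s.indicator (fun _ => 1) - 1) | m]
      =ᵐ[μ] g * (c * μ[s.indicator (fun _ => 1) | m] - 1) := by
  have hsplit : g * (c * s.indicator (fun _ => 1) - 1) = g * c * s.indicator (fun _ => 1) - g := by
    ring
  have h1i : Integrable (s.indicator fun _ => (1 : ℝ)) μ := (integrable_const 1).indicator hs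
  have hgc1i : Integrable (g * c * s.indicator fun _ => (1 : ℝ)) μ := by
    rw [mul_indicator_one_eq_indicator]
    exact hgci.indicator hs
  rw [hsplit]
  filter_upwards [condExp_sub hgc1i hgi m,
    condExp_mul_of_stronglyMeasurable_left (hg.mul hc) hgc1i h1i] with ω hsub hmul
  rw [hsub, Pi.sub_apply, hmul, condExp_of_stronglyMeasurable hm hg hgi]
  simp only [Pi.mul_apply, Pi.sub_apply, Pi.one_apply]
  ring

theorem martingale_of_sub_eq_mul_indicator_sub_one {F : Filtration ℕ m0}
    {M g c : ℕ → Ω → ℝ} {R : ℕ → Set Ω}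
    (hM0 : StronglyMeasurable[F 0] (M 0)) (hM0i : Integrable (M 0) μ)
    (hg : ∀ n, StronglyMeasurable[F n] (g n)) (hgi : ∀ n, Integrable (g n) μ)
    (hc : ∀ n, StronglyMeasurable[F n] (c n)) (hgci : ∀ n, Integrable (g n * c n) μ)
    (hR : ∀ n, MeasurableSet[F (n + 1)] (R n))
    (hinc : ∀ n, M (n + 1) - M n = g n * (c n * (R n).indicator (fun _ => 1) - 1))
    (hcR : ∀ n, c n * μ[(R n).indicator (fun _ => 1) | F n] =ᵐ[μ] 1) :
    Martingale M F μ := by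
  have hM : ∀ n, StronglyMeasurable[F n] (M n) ∧ Integrable (M n) μ := by
    intro n
    induction n with
    | zero => exact ⟨hM0, hM0i⟩
    | succ n ih =>
      have hinc_meas : StronglyMeasurable[F (n + 1)] (M (n + 1) - M n) := by
        rw [hinc n]
        refine ((hg n).mono (F.mono n.le_succ)).mul
          ((((hc n).mono (F.mono n.le_succ)).mul ?_).sub stronglyMeasurable_const)
        exact stronglyMeasurable_const.indicator (hR n)
      have hinc_int : Integrable (M (n + 1) - M n) μ := by
        rw [hinc n, mul_sub, mul_one, ← mul_assoc, mul_indicator_one_eq_indicator]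
        exact ((hgci n).indicator (F.le _ _ (hR n))).sub (hgi n)
      rw [← sub_add_cancel (M (n + 1)) (M n)]
      exact ⟨hinc_meas.add (ih.1.mono (F.mono n.le_succ)), hinc_int.add ih.2⟩
  refine martingale_of_condExp_sub_eq_zero_nat (fun n => (hM n).1) (fun n => (hM n).2)
    fun n => ?_
  filter_upwards [hinc n ▸ condExp_mul_mul_indicator_sub_one (F.le n) (hg n) (hc n) (hgi n)
    (hgci n) (F.le _ _ (hR n)), hcR n] with ω h hω
  simp [h, hω]

end PullOut

section ReinforcedWalk

variable {Ω : Type*} (X : ℕ → Ω → ℤ) (w : ℕ → ℝ) (a : ℤ → ℝ) (Δ : ℕ → ℤ → Ω → ℝ)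

def leftIncrement (n : ℕ) (ω : Ω) : ℝ :=
  a (X n ω) * Δ n (X n ω - 1) ω

noncomputable def weightRatio (n : ℕ) (ω : Ω) : ℝ :=
  w (visits X n (X n ω - 1) ω) / w (visits X n (X n ω + 1) ω)

variable {X w a Δ}

theorem weightRatio_nonneg (hwpos : ∀ k, 0 < w k) (n : ℕ) (ω : Ω) : 0 ≤ weightRatio X w n ω :=
  div_nonneg (hwpos _).le (hwpos _).le

theorem weightRatio_le (hwpos : ∀ k, 0 < w k) (hwmono : Monotone w) (n : ℕ) (ω : Ω) :
    weightRatio X w n ω ≤ w (n + 1) / w 0 :=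
  div_le_div₀ (hwpos _).le (hwmono (visits_le X n _ ω)) (hwpos 0) (hwmono (Nat.zero_le _))

theorem norm_weightRatio_add_one_le (hwpos : ∀ k, 0 < w k) (hwmono : Monotone w) (n : ℕ)
    (ω : Ω) : ‖weightRatio X w n ω + 1‖ ≤ w (n + 1) / w 0 + 1 := by
  rw [Real.norm_eq_abs, abs_of_nonneg (by linarith [weightRatio_nonneg (X := X) hwpos n ω])]
  linarith [weightRatio_le (X := X) hwpos hwmono n ω]

theorem weightRatio_add_one_mul (hwpos : ∀ k, 0 < w k) (n : ℕ) (ω : Ω) :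
    (weightRatio X w n ω + 1) * (w (visits X n (X n ω + 1) ω) /
      (w (visits X n (X n ω + 1) ω) + w (visits X n (X n ω - 1) ω))) = 1 := by
  have := hwpos (visits X n (X n ω + 1) ω)
  have := hwpos (visits X n (X n ω - 1) ω)
  rw [weightRatio]
  field_simp
  ring

theorem one_le_weight_div_weight_zero (hwpos : ∀ k, 0 < w k) (hwmono : Monotone w) (n : ℕ) :
    1 ≤ w n / w 0 :=
  (one_le_div (hwpos 0)).2 (hwmono (Nat.zero_le n))

theorem abs_leftIncrement_le (ha : ∀ x, 0 < a x ∧ a x ≤ 1) {n : ℕ} {C : ℝ}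
    (hΔ : ∀ z ω, |Δ n z ω| ≤ C) (ω : Ω) : |leftIncrement X a Δ n ω| ≤ C := by
  rw [leftIncrement, abs_mul, abs_of_pos (ha _).1]
  exact (mul_le_of_le_one_left (abs_nonneg _) (ha _).2).trans (hΔ _ _)

theorem abs_lastIncrement_le (hwpos : ∀ k, 0 < w k) (hwmono : Monotone w)
    (ha : ∀ x, 0 < a x ∧ a x ≤ 1) (hΔ0 : ∀ z ω, Δ 0 z ω = 1)
    (hΔ : ∀ n z ω, Δ (n + 1) z ω =
      if X (n + 1) ω = X n ω + 1 ∧ z = X n ω then leftIncrement X a Δ n ω * weightRatio X w n ω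
      else Δ n z ω) (n : ℕ) (z : ℤ) (ω : Ω) :
    |Δ n z ω| ≤ ∏ k ∈ Finset.range n, w (k + 1) / w 0 := by
  induction n generalizing z ω with
  | zero => simp [hΔ0]
  | succ n ih =>
    have hC : 0 ≤ ∏ k ∈ Finset.range n, w (k + 1) / w 0 := (abs_nonneg _).trans (ih z ω)
    rw [Finset.prod_range_succ, hΔ]
    split_ifs
    · rw [abs_mul, abs_of_nonneg (weightRatio_nonneg hwpos n ω)]
      exact mul_le_mul (abs_leftIncrement_le ha ih ω) (weightRatio_le hwpos hwmono n ω)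
        (weightRatio_nonneg hwpos n ω) hC
    · exact (ih z ω).trans
        (le_mul_of_one_le_right hC (one_le_weight_div_weight_zero hwpos hwmono _))

variable {m0 : MeasurableSpace Ω} {F : Filtration ℕ m0}

theorem measurable_visits {m : MeasurableSpace Ω} {n : ℕ} (hX : ∀ k ≤ n, Measurable[m] (X k))
    (x : ℤ) : Measurable[m] (visits X n x) := by
  have hsum : visits X n x = fun ω => ∑ k ∈ Finset.range (n + 1), if X k ω = x then 1 else 0 := by
    funext ω
    rw [visits, Finset.card_filter]
  rw [hsum]
  refine Finset.measurable_sum _ fun k hk => Measurable.ite ?_ measurable_const measurable_const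
  exact hX k (Nat.lt_succ_iff.mp (Finset.mem_range.mp hk)) (measurableSet_singleton x)

theorem measurable_weightRatio (hX : ∀ n, Measurable[F n] (X n)) (n : ℕ) :
    Measurable[F n] (weightRatio X w n) := by
  have hvisits (f : ℤ → ℤ) : Measurable[F n] fun ω => w (visits X n (f (X n ω)) ω) :=
    measurable_from_top.comp (measurable_apply_of_countable
      (fun x => measurable_visits (fun k hk => (hX k).mono (F.mono hk) le_rfl) (f x)) (hX n))
  exact (hvisits (· - 1)).div (hvisits (· + 1))

theorem measurable_leftIncrement (hX : ∀ n, Measurable[F n] (X n)) {n : ℕ}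
    (hΔ : ∀ z, Measurable[F n] (Δ n z)) : Measurable[F n] (leftIncrement X a Δ n) :=
  (measurable_from_top.comp (hX n)).mul
    (measurable_apply_of_countable (fun z => hΔ (z - 1)) (hX n))

theorem measurable_lastIncrement (hX : ∀ n, Measurable[F n] (X n)) (hΔ0 : ∀ z ω, Δ 0 z ω = 1)
    (hΔ : ∀ n z ω, Δ (n + 1) z ω =
      if X (n + 1) ω = X n ω + 1 ∧ z = X n ω then leftIncrement X a Δ n ω * weightRatio X w n ω
      else Δ n z ω) (n : ℕ) (z : ℤ) : Measurable[F n] (Δ n z) := by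
  induction n generalizing z with
  | zero =>
    rw [show Δ 0 z = fun _ => 1 from funext (hΔ0 z)]
    exact measurable_const
  | succ n ih =>
    have hmono {f : Ω → ℝ} (hf : Measurable[F n] f) : Measurable[F (n + 1)] f :=
      hf.mono (F.mono n.le_succ) le_rfl
    have hstep : MeasurableSet[F (n + 1)] {ω | X (n + 1) ω = X n ω + 1 ∧ z = X n ω} :=
      (measurableSet_eq_fun (hX _) (((hX n).mono (F.mono n.le_succ) le_rfl).add_const 1)).inter
        ((hX n).mono (F.mono n.le_succ) le_rfl (measurableSet_singleton z))
    rw [show Δ (n + 1) z = _ from funext (hΔ n z)]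
    exact Measurable.ite hstep
      (hmono ((measurable_leftIncrement hX ih).mul (measurable_weightRatio hX n))) (hmono (ih z))

end ReinforcedWalk

theorem stmt9_general {Ω : Type*} [m0 : MeasurableSpace Ω] (μ : Measure Ω) [IsProbabilityMeasure μ]
    (X : ℕ → Ω → ℤ) (hX : ∀ n, StronglyMeasurable (X n))
    (w : ℕ → ℝ) (hwpos : ∀ k, 0 < w k) (hwmono : Monotone w)
    (htransR : ∀ n,
      μ[Set.indicator {ω | X (n+1) ω = X n ω + 1} (fun _ => (1:ℝ)) |
          (Filtration.natural X hX) n]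
        =ᵐ[μ] fun ω => w (visits X n (X n ω + 1) ω) /
          (w (visits X n (X n ω + 1) ω) + w (visits X n (X n ω - 1) ω)))
    (a : ℤ → ℝ) (ha : ∀ x, 0 < a x ∧ a x ≤ 1)
    (Δ : ℕ → ℤ → Ω → ℝ) (hΔ0 : ∀ z ω, Δ 0 z ω = 1)
    (hΔ : ∀ n z ω, Δ (n+1) z ω =
      if X (n+1) ω = X n ω + 1 ∧ z = X n ω then
        a (X n ω) * Δ n (X n ω - 1) ω *
          w (visits X n (X n ω - 1) ω) / w (visits X n (X n ω + 1) ω)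
      else Δ n z ω)
    (M : ℕ → Ω → ℝ) (hM0 : ∀ ω, M 0 ω = 0)
    (hM : ∀ n ω, M (n+1) ω =
      if X (n+1) ω = X n ω + 1 then
        M n ω + a (X n ω) * Δ n (X n ω - 1) ω *
          w (visits X n (X n ω - 1) ω) / w (visits X n (X n ω + 1) ω)
      else M n ω - a (X n ω) * Δ n (X n ω - 1) ω) :
    Martingale M (Filtration.natural X hX) μ := by
  set F := Filtration.natural X hX
  have hXF (n : ℕ) : Measurable[F n] (X n) := (Filtration.stronglyAdapted_natural hX n).measurable
  have hΔ' (n : ℕ) (z : ℤ) (ω : Ω) : Δ (n + 1) z ω =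
      if X (n + 1) ω = X n ω + 1 ∧ z = X n ω then leftIncrement X a Δ n ω * weightRatio X w n ω
      else Δ n z ω := by
    rw [hΔ, leftIncrement, weightRatio, mul_div_assoc]
  have hg (n : ℕ) : Measurable[F n] (leftIncrement X a Δ n) :=
    measurable_leftIncrement hXF (measurable_lastIncrement hXF hΔ0 hΔ' n)
  have hgi (n : ℕ) : Integrable (leftIncrement X a Δ n) μ :=
    .of_bound ((hg n).mono (F.le n) le_rfl).aestronglyMeasurable _ (ae_of_all _
      (abs_leftIncrement_le ha (abs_lastIncrement_le hwpos hwmono ha hΔ0 hΔ' n)))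
  have hc (n : ℕ) : Measurable[F n] (weightRatio X w n + 1) :=
    (measurable_weightRatio hXF n).add_const 1
  have hM0' : M 0 = 0 := funext hM0
  refine martingale_of_sub_eq_mul_indicator_sub_one (g := leftIncrement X a Δ)
    (c := fun n => weightRatio X w n + 1) (R := fun n => {ω | X (n + 1) ω = X n ω + 1})
    (hM0' ▸ stronglyMeasurable_zero) (hM0' ▸ integrable_zero _ _ μ)
    (fun n => (hg n).stronglyMeasurable) hgi (fun n => (hc n).stronglyMeasurable)
    (fun n => (hgi n).mul_bdd ((hc n).mono (F.le n) le_rfl).aestronglyMeasurable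
      (ae_of_all _ (norm_weightRatio_add_one_le hwpos hwmono n)))
    (fun n => measurableSet_eq_fun (hXF _) (((hXF n).mono (F.mono n.le_succ) le_rfl).add_const 1))
    (fun n => funext fun ω => ?_) (fun n => ?_)
  · rw [Pi.sub_apply, hM]
    split_ifs with h <;> simp [h, leftIncrement, weightRatio, mul_div_assoc]
  · filter_upwards [htransR n] with ω h
    rw [Pi.mul_apply, h]
    exact weightRatio_add_one_mul hwpos n ω

/-- The process `M` associated to the vertex-reinforced random walk on `ℤ` with
nondecreasing weight `w` (via the increment processes `Δ`) is a martingale with respect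
to the natural filtration of the walk. -/
theorem stmt9 {Ω : Type*} [m0 : MeasurableSpace Ω] (μ : Measure Ω) [IsProbabilityMeasure μ]
    (X : ℕ → Ω → ℤ) (hX : ∀ n, StronglyMeasurable (X n))
    (hX0 : ∀ ω, X 0 ω = 0)
    (hstep : ∀ n ω, X (n+1) ω = X n ω + 1 ∨ X (n+1) ω = X n ω - 1)
    (w : ℕ → ℝ) (hwpos : ∀ k, 0 < w k) (hwmono : Monotone w)
    (htransR : ∀ n,
      μ[Set.indicator {ω | X (n+1) ω = X n ω + 1} (fun _ => (1:ℝ)) |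
          (Filtration.natural X hX) n]
        =ᵐ[μ] fun ω => w (visits X n (X n ω + 1) ω) /
          (w (visits X n (X n ω + 1) ω) + w (visits X n (X n ω - 1) ω)))
    (htransL : ∀ n,
      μ[Set.indicator {ω | X (n+1) ω = X n ω - 1} (fun _ => (1:ℝ)) |
          (Filtration.natural X hX) n]
        =ᵐ[μ] fun ω => w (visits X n (X n ω - 1) ω) /
          (w (visits X n (X n ω + 1) ω) + w (visits X n (X n ω - 1) ω)))
    (a : ℤ → ℝ) (ha : ∀ x, 0 < a x ∧ a x ≤ 1)
    (Δ : ℕ → ℤ → Ω → ℝ) (hΔ0 : ∀ z ω, Δ 0 z ω = 1)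
    (hΔ : ∀ n z ω, Δ (n+1) z ω =
      if X (n+1) ω = X n ω + 1 ∧ z = X n ω then
        a (X n ω) * Δ n (X n ω - 1) ω *
          w (visits X n (X n ω - 1) ω) / w (visits X n (X n ω + 1) ω)
      else Δ n z ω)
    (M : ℕ → Ω → ℝ) (hM0 : ∀ ω, M 0 ω = 0)
    (hM : ∀ n ω, M (n+1) ω =
      if X (n+1) ω = X n ω + 1 then
        M n ω + a (X n ω) * Δ n (X n ω - 1) ω *
          w (visits X n (X n ω - 1) ω) / w (visits X n (X n ω + 1) ω)
      else M n ω - a (X n ω) * Δ n (X n ω - 1) ω) :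
    Martingale M (Filtration.natural X hX) μ :=
  stmt9_general (m0 := m0) μ X hX w hwpos hwmono htransR a ha Δ hΔ0 hΔ M hM0 hM
end

section
/- With the VRRW setup and the processes Δ_n(z) as above, for any y > 0 and any n ≤ τ_{-y}, one has Δ_n(z) ≥ A_y / (w(Z_n(z)) w(Z_n(z+1))) for all −y ≤ z ≤ X_n, where A_y = ∏_{x=−y}^{∞} a_x. -/
lemma visits_succ {Ω : Type*} (X : ℕ → Ω → ℤ) (n : ℕ) (x : ℤ) (ω : Ω) :
    visits X (n+1) x ω = visits X n x ω + (if X (n+1) ω = x then 1 else 0) := by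
  unfold visits
  rw [Finset.range_add_one, Finset.filter_insert]
  split_ifs with h
  · rw [Finset.card_insert_of_notMem, add_comm]
    intro hmem
    exact Finset.notMem_range_self (Finset.mem_of_mem_filter _ hmem)
  · simp

lemma visits_eq_zero {Ω : Type*} (X : ℕ → Ω → ℤ) (n : ℕ) (x : ℤ) (ω : Ω)
    (h : ∀ k, k ≤ n → X k ω ≠ x) : visits X n x ω = 0 := by
  unfold visits
  rw [Finset.card_eq_zero, Finset.filter_eq_empty_iff]
  intro k hk
  exact h k (Nat.lt_succ_iff.mp (Finset.mem_range.mp hk))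

lemma aux_div_le {c d e : ℝ} (hc : 0 ≤ c) (hd : 0 < d) (h : d ≤ e) : c / e ≤ c / d := by
  have he : 0 < e := lt_of_lt_of_le hd h
  rw [div_le_div_iff₀ he hd]
  nlinarith

lemma tprod_le_prod_subset {ι : Type*} {f : ι → ℝ} (hpos : ∀ x, 0 < f x)
    (hle : ∀ x, f x ≤ 1) (s : Finset ι) : (∏' x, f x) ≤ ∏ i ∈ s, f i := by
  classical
  have hanti : Antitone (fun t : Finset ι => ∏ i ∈ t, f i) := by
    intro u t hut
    dsimp only
    rw [← Finset.prod_sdiff hut]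
    exact mul_le_of_le_one_left (Finset.prod_nonneg fun i _ => (hpos i).le)
      (Finset.prod_le_one (fun i _ => (hpos i).le) (fun i _ => hle i))
  have hbdd : BddBelow (Set.range fun t : Finset ι => ∏ i ∈ t, f i) := by
    refine ⟨0, ?_⟩
    rintro r ⟨t, rfl⟩
    exact Finset.prod_nonneg fun i _ => (hpos i).le
  have hprod : HasProd f (⨅ t : Finset ι, ∏ i ∈ t, f i) := tendsto_atTop_ciInf hanti hbdd
  rw [hprod.tprod_eq]
  exact ciInf_le hbdd s

/-- Lower bound on the increments of the VRRW martingale: for `y > 0` and `n ≤ τ_{-y}`,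
`Δ_n(z) ≥ A_y / (w(Z_n(z)) w(Z_n(z+1)))` for all `-y ≤ z ≤ X_n`, where
`A_y = ∏_{x = -y}^{∞} a_x` (the case `z = X_n` being understood as the prospective
increment `Δ_n = a_{X_n} Δ_n(X_n - 1) w(Z_n(X_n-1))/w(Z_n(X_n+1))`). -/
theorem stmt11 {Ω : Type*} (X : ℕ → Ω → ℤ)
    (hX0 : ∀ ω, X 0 ω = 0)
    (hstep : ∀ n ω, X (n+1) ω = X n ω + 1 ∨ X (n+1) ω = X n ω - 1)
    (w : ℕ → ℝ) (hw0 : w 0 = 1) (hwmono : Monotone w)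
    (ε : ℝ) (hε : 0 < ε) (a : ℤ → ℝ)
    (ha : ∀ x : ℤ, a x = if 0 ≤ x then 1 - 1/((x:ℝ)+2) ^ ((1:ℝ)+ε) else 1/2)
    (Δ : ℕ → ℤ → Ω → ℝ) (hΔ0 : ∀ z ω, Δ 0 z ω = 1)
    (hΔ : ∀ n z ω, Δ (n+1) z ω =
      if X (n+1) ω = X n ω + 1 ∧ z = X n ω then
        a (X n ω) * Δ n (X n ω - 1) ω *
          w (visits X n (X n ω - 1) ω) / w (visits X n (X n ω + 1) ω)
      else Δ n z ω)
    (A : ℕ → ℝ) (hA : ∀ y : ℕ, A y = ∏' x : ℤ, (if -(y:ℤ) ≤ x then a x else 1)) :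
    ∀ y : ℕ, 0 < y → ∀ n : ℕ, ∀ ω : Ω,
      (∀ i, i < n → X i ω ≠ -(y:ℤ)) →
      (∀ z : ℤ, -(y:ℤ) ≤ z → z < X n ω →
        A y / (w (visits X n z ω) * w (visits X n (z+1) ω)) ≤ Δ n z ω) ∧
      (A y / (w (visits X n (X n ω) ω) * w (visits X n (X n ω + 1) ω)) ≤
        a (X n ω) * Δ n (X n ω - 1) ω *
          w (visits X n (X n ω - 1) ω) / w (visits X n (X n ω + 1) ω)) := by
  intro y hy n₀ ω
  -- basic facts about w
  have hw1 : ∀ k, (1:ℝ) ≤ w k := fun k => hw0 ▸ hwmono (Nat.zero_le k)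
  have hwpos : ∀ k, (0:ℝ) < w k := fun k => lt_of_lt_of_le one_pos (hw1 k)
  -- basic facts about a
  have hapos : ∀ x : ℤ, 0 < a x := by
    intro x; rw [ha x]; split_ifs with hx
    · have hx' : (0:ℝ) ≤ (x:ℝ) := by exact_mod_cast hx
      have hb : (1:ℝ) < (x:ℝ) + 2 := by linarith
      have h1 : (1:ℝ) < ((x:ℝ)+2) ^ ((1:ℝ)+ε) := by
        rw [Real.one_lt_rpow_iff_of_pos (by linarith)]
        exact Or.inl ⟨hb, by linarith⟩
      have h2 : 1/((x:ℝ)+2) ^ ((1:ℝ)+ε) < 1 := by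
        rw [div_lt_one (by linarith)]; exact h1
      linarith
    · norm_num
  have hale : ∀ x : ℤ, a x ≤ 1 := by
    intro x; rw [ha x]; split_ifs with hx
    · have hx' : (0:ℝ) ≤ (x:ℝ) := by exact_mod_cast hx
      have hb : (0:ℝ) < ((x:ℝ)+2) ^ ((1:ℝ)+ε) := Real.rpow_pos_of_pos (by linarith) _
      have : 0 ≤ 1/((x:ℝ)+2) ^ ((1:ℝ)+ε) := by positivity
      linarith
    · norm_num
  -- The finite products P z
  set P : ℤ → ℝ := fun z => ∏ i ∈ Finset.Icc (-(y:ℤ)) z, a i with hP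
  have hPpos : ∀ z, 0 < P z := fun z => Finset.prod_pos fun i _ => hapos i
  have hPle : ∀ z, P z ≤ 1 := fun z =>
    Finset.prod_le_one (fun i _ => (hapos i).le) (fun i _ => hale i)
  have hPsucc : ∀ z : ℤ, -(y:ℤ) ≤ z → P z = P (z-1) * a z := by
    intro z hz
    have hins : Finset.Icc (-(y:ℤ)) z = insert z (Finset.Icc (-(y:ℤ)) (z-1)) := by
      ext i; simp only [Finset.mem_Icc, Finset.mem_insert]; omega
    rw [hP]
    dsimp only
    rw [hins, Finset.prod_insert (by simp only [Finset.mem_Icc]; omega)]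
    ring
  -- A y is below every P z
  have hAleP : ∀ z : ℤ, A y ≤ P z := by
    intro z
    rw [hA y]
    have hfpos : ∀ x : ℤ, 0 < (if -(y:ℤ) ≤ x then a x else 1) := by
      intro x; split_ifs; exacts [hapos _, one_pos]
    have hfle : ∀ x : ℤ, (if -(y:ℤ) ≤ x then a x else 1) ≤ 1 := by
      intro x; split_ifs; exacts [hale _, le_refl 1]
    refine le_trans (tprod_le_prod_subset hfpos hfle (Finset.Icc (-(y:ℤ)) z)) (le_of_eq ?_)
    exact Finset.prod_congr rfl fun i hi => if_pos (Finset.mem_Icc.mp hi).1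
  -- the walk stays above -y before hitting
  have hwalk : ∀ n : ℕ, (∀ i, i < n → X i ω ≠ -(y:ℤ)) →
      (∀ i, i < n → -(y:ℤ) < X i ω) ∧ -(y:ℤ) ≤ X n ω := by
    intro n
    induction n with
    | zero =>
      intro _
      refine ⟨fun i hi => absurd hi (Nat.not_lt_zero i), ?_⟩
      rw [hX0]
      have : (0:ℤ) < (y:ℤ) := by exact_mod_cast hy
      omega
    | succ n ih =>
      intro h
      obtain ⟨ih1, ih2⟩ := ih (fun i hi => h i (Nat.lt_succ_of_lt hi))
      have hXn : -(y:ℤ) < X n ω := lt_of_le_of_ne ih2 (Ne.symm (h n n.lt_succ_self))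
      refine ⟨?_, ?_⟩
      · intro i hi
        rcases Nat.lt_succ_iff_lt_or_eq.mp hi with h1 | rfl
        · exact ih1 i h1
        · exact hXn
      · rcases hstep n ω with hs | hs <;> omega
  -- Δ is 1 at never-visited sites
  have hΔone : ∀ n : ℕ, ∀ z : ℤ, (∀ k, k < n → X k ω ≠ z) → Δ n z ω = 1 := by
    intro n
    induction n with
    | zero => intro z _; exact hΔ0 z ω
    | succ n ih =>
      intro z h
      rw [hΔ, if_neg, ih z (fun k hk => h k (Nat.lt_succ_of_lt hk))]
      rintro ⟨-, rfl⟩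
      exact h n n.lt_succ_self rfl
  -- part 1 implies part 2 (at the same time n)
  have part2of1 : ∀ n : ℕ, (∀ i, i < n → X i ω ≠ -(y:ℤ)) →
      (∀ z : ℤ, -(y:ℤ) ≤ z → z < X n ω →
        P z / (w (visits X n z ω) * w (visits X n (z+1) ω)) ≤ Δ n z ω) →
      P (X n ω) / (w (visits X n (X n ω) ω) * w (visits X n (X n ω + 1) ω)) ≤
        a (X n ω) * Δ n (X n ω - 1) ω *
          w (visits X n (X n ω - 1) ω) / w (visits X n (X n ω + 1) ω) := by
    intro n hhit h1
    obtain ⟨hlt, hge⟩ := hwalk n hhit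
    rcases eq_or_lt_of_le hge with heq | hgt
    · -- X n ω = -y
      have hx : X n ω = -(y:ℤ) := heq.symm
      rw [hx]
      have hΔ1 : Δ n (-(y:ℤ) - 1) ω = 1 := by
        apply hΔone
        intro k hk
        have := hlt k hk
        omega
      have hv0 : visits X n (-(y:ℤ) - 1) ω = 0 := by
        apply visits_eq_zero
        intro k hk
        rcases Nat.lt_or_ge k n with h' | h'
        · have := hlt k h'; omega
        · have : k = n := le_antisymm hk h'
          rw [this, hx]; omega
      rw [hΔ1, hv0, hw0, mul_one, mul_one]
      have hPa : P (-(y:ℤ)) = a (-(y:ℤ)) := by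
        rw [hP]; dsimp only; rw [Finset.Icc_self, Finset.prod_singleton]
      rw [hPa]
      exact aux_div_le (hapos _).le (hwpos _)
        (le_mul_of_one_le_left (hwpos _).le (hw1 _))
    · -- -y < X n ω
      have h1' := h1 (X n ω - 1) (by omega) (by omega)
      rw [show X n ω - 1 + 1 = X n ω by ring] at h1'
      have hPe : P (X n ω) = P (X n ω - 1) * a (X n ω) := hPsucc (X n ω) (by omega)
      set wA := w (visits X n (X n ω - 1) ω) with hwA
      set wB := w (visits X n (X n ω) ω) with hwB
      set wC := w (visits X n (X n ω + 1) ω) with hwC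
      have hApos : 0 < wA := hwpos _
      have hBpos : 0 < wB := hwpos _
      have hCpos : 0 < wC := hwpos _
      have hm : a (X n ω) * (P (X n ω - 1) / (wA * wB)) * wA ≤
          a (X n ω) * Δ n (X n ω - 1) ω * wA :=
        mul_le_mul_of_nonneg_right
          (mul_le_mul_of_nonneg_left h1' (hapos _).le) hApos.le
      calc P (X n ω) / (wB * wC)
          = a (X n ω) * (P (X n ω - 1) / (wA * wB)) * wA / wC := by
            rw [hPe]; field_simp
        _ ≤ a (X n ω) * Δ n (X n ω - 1) ω * wA / wC := by
            exact div_le_div_of_nonneg_right hm hCpos.le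
  -- the main induction: part 1 for all n
  have key : ∀ n : ℕ, (∀ i, i < n → X i ω ≠ -(y:ℤ)) →
      (∀ z : ℤ, -(y:ℤ) ≤ z → z < X n ω →
        P z / (w (visits X n z ω) * w (visits X n (z+1) ω)) ≤ Δ n z ω) := by
    intro n
    induction n with
    | zero =>
      intro _ z _ _
      rw [hΔ0]
      rw [div_le_one (mul_pos (hwpos _) (hwpos _))]
      have h1 := hw1 (visits X 0 z ω)
      have h2 := hw1 (visits X 0 (z+1) ω)
      have h3 := hPle z
      nlinarith
    | succ n ih =>
      intro hhit z hz1 hz2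
      have hhitn : ∀ i, i < n → X i ω ≠ -(y:ℤ) := fun i hi => hhit i (Nat.lt_succ_of_lt hi)
      have ih' := ih hhitn
      have hwv : ∀ x : ℤ, w (visits X n x ω) ≤ w (visits X (n+1) x ω) := by
        intro x
        apply hwmono
        rw [visits_succ]
        exact Nat.le_add_right _ _
      have hden : ∀ (zz : ℤ) (c : ℝ), 0 ≤ c →
          c / (w (visits X (n+1) zz ω) * w (visits X (n+1) (zz+1) ω)) ≤
          c / (w (visits X n zz ω) * w (visits X n (zz+1) ω)) := by
        intro zz c hc
        exact aux_div_le hc (mul_pos (hwpos _) (hwpos _))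
          (mul_le_mul (hwv zz) (hwv (zz+1)) (hwpos _).le
            (le_trans (hwpos _).le (hwv zz)))
      by_cases hzX : z = X n ω
      · subst hzX
        rcases hstep n ω with hR | hL
        · have hΔeq : Δ (n+1) (X n ω) ω = a (X n ω) * Δ n (X n ω - 1) ω *
              w (visits X n (X n ω - 1) ω) / w (visits X n (X n ω + 1) ω) := by
            rw [hΔ, if_pos ⟨hR, rfl⟩]
          rw [hΔeq]
          exact le_trans (hden (X n ω) (P (X n ω)) (hPpos _).le) (part2of1 n hhitn ih')
        · exfalso
          rw [hL] at hz2
          omega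
      · have hΔeq : Δ (n+1) z ω = Δ n z ω := by
          rw [hΔ, if_neg]
          rintro ⟨-, h⟩
          exact hzX h
        rw [hΔeq]
        have hzlt : z < X n ω := by
          rcases hstep n ω with hR | hL
          · rw [hR] at hz2; omega
          · rw [hL] at hz2; omega
        exact le_trans (hden z (P z) (hPpos z).le) (ih' z hz1 hzlt)
  -- conclude
  intro hhit
  have k1 := key n₀ hhit
  have k2 := part2of1 n₀ hhit k1
  constructor
  · intro z hz1 hz2
    refine le_trans ?_ (k1 z hz1 hz2)
    exact div_le_div_of_nonneg_right (hAleP z) (mul_pos (hwpos _) (hwpos _)).le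
  · refine le_trans ?_ k2
    exact div_le_div_of_nonneg_right (hAleP (X n₀ ω)) (mul_pos (hwpos _) (hwpos _)).le
end
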